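/- Suppose n ≥ k − 1. Let Ω = Ω(V,M) and Ω′ = Ω(V′,M′) be reduced Pauli monomials, i.e. the columns of V ∈ F₂^{k×m} (resp. V′ ∈ F₂^{k×m′}) each have even Hamming weight and are linearly independent over F₂ (rank V = m, rank V′ = m′), with 0 ≤ m, m′ ≤ k − 1, and M ∈ F₂^{m×m}, M′ ∈ F₂^{m′×m′} symmetric with zero diagonal. Then tr(Ω†Ω′) = d^k if and only if Ω = Ω′ as operators on (ℂ^d)^{⊗k}. -/

import Mathlib

open Matrix
open scoped Classical

noncomputable section

/-- The four 2×2 Pauli matrices: `0 ↦ I`, `1 ↦ X`, `2 ↦ Y`, `3 ↦ Z`. -/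
def pauli1 : Fin 4 → Matrix (Fin 2) (Fin 2) ℂ
  | 0 => !![1, 0; 0, 1]
  | 1 => !![0, 1; 1, 0]
  | 2 => !![0, -Complex.I; Complex.I, 0]
  | 3 => !![1, 0; 0, -1]

/-- The `n`-qubit Pauli operator associated to the string `s : Fin n → Fin 4`. -/
def PauliOp (n : ℕ) (s : Fin n → Fin 4) :
    Matrix (Fin n → Fin 2) (Fin n → Fin 2) ℂ :=
  Matrix.of fun i j => ∏ a, pauli1 (s a) (i a) (j a)

/-- `χ(A,B) := tr(ABAB)/d` with `d = 2^n`. -/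
def chi (n : ℕ) (A B : Matrix (Fin n → Fin 2) (Fin n → Fin 2) ℂ) : ℂ :=
  Matrix.trace (A * B * A * B) / (2 ^ n : ℂ)

/-- `P^{⊗v}` for `v ∈ F₂^k`: the operator on `(ℂ^{2^n})^{⊗k}` acting as `P` on the
tensor factors where `v` is `1` and as the identity elsewhere. -/
def tensorPow (n k : ℕ) (P : Matrix (Fin n → Fin 2) (Fin n → Fin 2) ℂ)
    (v : Fin k → ZMod 2) :
    Matrix (Fin k → Fin n → Fin 2) (Fin k → Fin n → Fin 2) ℂ :=
  Matrix.of fun I J =>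
    ∏ a, (if v a = 1 then P (I a) (J a) else if I a = J a then 1 else 0)

/-- The Pauli monomial `Ω(V,M)` on `k` copies of `n` qubits:
`Ω(V,M) = d^{-m} ∑_{(P₁,…,P_m)} (∏_{i<j} χ(P_i,P_j)^{M_{ij}}) P₁^{⊗v₁} ⋯ P_m^{⊗v_m}`,
where `v₁,…,v_m` are the columns of `V`. -/
def pauliMonomial (n k m : ℕ) (V : Fin k → Fin m → ZMod 2)
    (M : Fin m → Fin m → ZMod 2) :
    Matrix (Fin k → Fin n → Fin 2) (Fin k → Fin n → Fin 2) ℂ :=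
  (((2 : ℂ) ^ n) ^ m)⁻¹ •
    ∑ P : Fin m → (Fin n → Fin 4),
      (∏ q ∈ Finset.univ.filter (fun q : Fin m × Fin m => q.1 < q.2),
          chi n (PauliOp n (P q.1)) (PauliOp n (P q.2)) ^ (M q.1 q.2).val) •
        (List.ofFn fun i : Fin m =>
          tensorPow n k (PauliOp n (P i)) (fun a => V a i)).prod

/-- The unitary on `(ℂ^{2^n})^{⊗k}` permuting the `k` tensor factors according to `π`. -/
def permMatrix (n k : ℕ) (π : Equiv.Perm (Fin k)) :
    Matrix (Fin k → Fin n → Fin 2) (Fin k → Fin n → Fin 2) ℂ :=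
  Matrix.of fun I J => if (fun a => I (π a)) = J then 1 else 0


/-!
Write `Ω(V,M) = d^{-m} ∑_P ε(P) T(P)`, where `ε(P)` is a product of values of `χ`, hence of
modulus one, and `T(P)` is a Kronecker product, over the copies `a` and qubits `b`, of `2 × 2`
site factors, each a product of Pauli matrices and hence unitary. The `T(P)` are orthogonal for
the Hilbert–Schmidt pairing: if `P ≠ Q` differ in slot `i` at qubit `b`, some Pauli `c`
anticommutes with exactly one of `P_i`, `Q_i` there, and linear independence of the columns of
`V` yields a copy `a` on which `c` anticommutes with exactly one of the two site factors, which
forces their pairing to vanish. Hence `tr(Ω†Ω) = d^{-2m} · 4^{nm} · d^k = d^k`, and for two such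
monomials `tr(Ω†Ω′) = d^k` says exactly that `tr((Ω - Ω′)†(Ω - Ω′)) = 0`.
-/

lemma neg_one_pow_val_add {R : Type*} [Ring R] (x y : ZMod 2) :
    (-1 : R) ^ (x + y).val = (-1) ^ x.val * (-1) ^ y.val := by
  rw [ZMod.val_add, ← neg_one_pow_eq_pow_mod_two (R := R), pow_add]

lemma trace_conjTranspose_mul_eq_zero_of_mul_eq_smul {𝕜 p : Type*} [Field 𝕜] [StarRing 𝕜]
    [CharZero 𝕜] [Fintype p] [DecidableEq p] {u A B : Matrix p p 𝕜} (hu : u ∈ unitary _)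
    {s t : 𝕜} (hA : u * A = s • (A * u)) (hB : u * B = t • (B * u)) (hst : star s * t = -1) :
    trace (Aᴴ * B) = 0 := by
  have hu₁ : uᴴ * u = 1 := Unitary.star_mul_self_of_mem hu
  have hu₂ : u * uᴴ = 1 := Unitary.mul_star_self_of_mem hu
  have key : trace (Aᴴ * B) = -trace (Aᴴ * B) :=
    calc trace (Aᴴ * B) = trace ((u * A)ᴴ * (u * B)) := by
          rw [conjTranspose_mul, mul_assoc, ← mul_assoc uᴴ, hu₁, one_mul]
      _ = star s * t * trace (u * uᴴ * (Aᴴ * B)) := by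
          rw [hA, hB, conjTranspose_smul, smul_mul_smul_comm, trace_smul, smul_eq_mul,
            conjTranspose_mul, Matrix.mul_assoc u, trace_mul_comm u]
          simp only [Matrix.mul_assoc]
      _ = -trace (Aᴴ * B) := by rw [hu₂, Matrix.one_mul, hst, neg_one_mul]
  exact self_eq_neg.mp key

lemma trace_conjTranspose_sum_smul_mul_self_of_orthogonal {ι p R : Type*} [Fintype ι]
    [DecidableEq ι] [Fintype p] [CommSemiring R] [StarRing R] (T : ι → Matrix p p R)
    (e : ι → R) (N : R) (hT : ∀ i j, trace ((T i)ᴴ * T j) = if i = j then N else 0) :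
    trace ((∑ i, e i • T i)ᴴ * ∑ i, e i • T i) = ∑ i, star (e i) * e i * N := by
  simp only [conjTranspose_sum, conjTranspose_smul, Matrix.sum_mul, Matrix.mul_sum,
    smul_mul_smul_comm, trace_sum, trace_smul, hT, smul_eq_mul, mul_ite, mul_zero,
    Finset.sum_ite_eq', Finset.mem_univ, if_true]

open scoped ComplexOrder in
lemma eq_of_trace_conjTranspose_mul_eq {𝕜 p q : Type*} [RCLike 𝕜] [Fintype p] [Fintype q]
    {A B : Matrix p q 𝕜} {N : 𝕜} (hA : trace (Aᴴ * A) = N) (hB : trace (Bᴴ * B) = N)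
    (hAB : trace (Aᴴ * B) = N) : A = B := by
  have hN : star N = N := by
    rw [← hA, ← trace_conjTranspose, conjTranspose_mul, conjTranspose_conjTranspose]
  have hBA : trace (Bᴴ * A) = N := by
    rw [← hN, ← hAB, ← trace_conjTranspose, conjTranspose_mul, conjTranspose_conjTranspose]
  rw [← sub_eq_zero, ← trace_conjTranspose_mul_self_eq_zero_iff, conjTranspose_sub,
    Matrix.sub_mul, Matrix.mul_sub, Matrix.mul_sub, trace_sub, trace_sub, trace_sub, hA, hB, hAB,
    hBA, sub_self]

section PiKron

variable {ι R : Type*} [Fintype ι] [CommSemiring R] {X : ι → Type*}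

def piKron (g : ∀ i, Matrix (X i) (X i) R) : Matrix (∀ i, X i) (∀ i, X i) R :=
  of fun I J => ∏ i, g i (I i) (J i)

lemma piKron_one [∀ i, DecidableEq (X i)] :
    piKron (fun i => (1 : Matrix (X i) (X i) R)) = 1 := by
  ext I J
  simp only [piKron, of_apply, one_apply, Finset.prod_ite_zero, Finset.prod_const_one,
    Finset.mem_univ, true_implies, funext_iff]

variable [DecidableEq ι] [∀ i, Fintype (X i)]

lemma piKron_mul (g h : ∀ i, Matrix (X i) (X i) R) :
    piKron g * piKron h = piKron fun i => g i * h i := by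
  ext I J
  simp only [piKron, mul_apply, of_apply, ← Finset.prod_mul_distrib]
  exact (Fintype.prod_sum fun i t => g i (I i) t * h i t (J i)).symm

lemma piKron_ofFn_prod [∀ i, DecidableEq (X i)] {m : ℕ}
    (g : Fin m → ∀ i, Matrix (X i) (X i) R) :
    (List.ofFn fun j => piKron (g j)).prod = piKron fun i => (List.ofFn fun j => g j i).prod := by
  induction m with
  | zero => simp [piKron_one]
  | succ m ih => simp only [List.ofFn_succ, List.prod_cons, ih, piKron_mul]

lemma trace_piKron (g : ∀ i, Matrix (X i) (X i) R) : trace (piKron g) = ∏ i, trace (g i) := by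
  simp only [trace, diag, piKron, of_apply]
  exact (Fintype.prod_sum fun i t => g i t t).symm

lemma trace_conjTranspose_piKron_mul [StarRing R] (g h : ∀ i, Matrix (X i) (X i) R) :
    trace ((piKron g)ᴴ * piKron h) = ∏ i, trace ((g i)ᴴ * h i) := by
  have : (piKron g)ᴴ = piKron fun i => (g i)ᴴ := by
    ext I J
    simp [piKron, conjTranspose_apply]
  rw [this, piKron_mul, trace_piKron]

end PiKron

def pauliSymplectic (a b : Fin 4) : ZMod 2 := if a = 0 ∨ b = 0 ∨ a = b then 0 else 1

lemma pauliSymplectic_zero_right (a : Fin 4) : pauliSymplectic a 0 = 0 := by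
  simp [pauliSymplectic]

lemma pauliSymplectic_ite (c p : Fin 4) (v : ZMod 2) :
    pauliSymplectic c (if v = 1 then p else 0) = v * pauliSymplectic c p := by
  split_ifs with h
  · rw [h, one_mul]
  · have hv : v = 0 := by revert v; decide
    rw [hv, zero_mul, pauliSymplectic_zero_right]

lemma exists_pauliSymplectic_ne {a b : Fin 4} (h : a ≠ b) :
    ∃ c, pauliSymplectic c a ≠ pauliSymplectic c b := by
  revert a b; decide

lemma pauli1_zero : pauli1 0 = 1 := by
  ext i j; fin_cases i <;> fin_cases j <;> simp [pauli1]

lemma pauli1_conjTranspose (a : Fin 4) : (pauli1 a)ᴴ = pauli1 a := by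
  fin_cases a <;> ext i j <;> fin_cases i <;> fin_cases j <;> simp [pauli1]

lemma pauli1_mul_self (a : Fin 4) : pauli1 a * pauli1 a = 1 := by
  fin_cases a <;> ext i j <;> fin_cases i <;> fin_cases j <;>
    simp [pauli1, Matrix.mul_apply, Fin.sum_univ_two]

lemma pauli1_mem_unitary (a : Fin 4) : pauli1 a ∈ unitary (Matrix (Fin 2) (Fin 2) ℂ) := by
  rw [Unitary.mem_iff, star_eq_conjTranspose, pauli1_conjTranspose, pauli1_mul_self]
  exact ⟨rfl, rfl⟩

lemma pauli1_mul_comm (a b : Fin 4) :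
    pauli1 a * pauli1 b = (-1 : ℂ) ^ (pauliSymplectic a b).val • (pauli1 b * pauli1 a) := by
  fin_cases a <;> fin_cases b <;> ext i j <;> fin_cases i <;> fin_cases j <;>
    simp [pauli1, pauliSymplectic, Matrix.mul_apply, Fin.sum_univ_two, ZMod.val_one]

lemma pauli1_mul_ofFn_prod (c : Fin 4) {m : ℕ} (f : Fin m → Fin 4) :
    pauli1 c * (List.ofFn fun i => pauli1 (f i)).prod =
      (-1 : ℂ) ^ (∑ i, pauliSymplectic c (f i)).val •
        ((List.ofFn fun i => pauli1 (f i)).prod * pauli1 c) := by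
  induction m with
  | zero => simp
  | succ m ih =>
    rw [List.ofFn_succ, List.prod_cons, ← mul_assoc, pauli1_mul_comm, smul_mul_assoc, mul_assoc,
      ih, mul_smul_comm, smul_smul, Fin.sum_univ_succ, neg_one_pow_val_add, mul_assoc]

lemma pauliOp_eq_piKron (n : ℕ) (s : Fin n → Fin 4) :
    PauliOp n s = piKron fun b => pauli1 (s b) :=
  rfl

lemma norm_chi_pauliOp (n : ℕ) (s t : Fin n → Fin 4) :
    ‖chi n (PauliOp n s) (PauliOp n t)‖ = 1 := by
  have hsite (a b : Fin 4) : ‖trace (pauli1 a * pauli1 b * pauli1 a * pauli1 b)‖ = 2 := by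
    rw [pauli1_mul_comm a b, smul_mul_assoc, smul_mul_assoc, Matrix.mul_assoc (pauli1 b),
      pauli1_mul_self, Matrix.mul_one, pauli1_mul_self, trace_smul, trace_one]
    simp
  simp only [chi, pauliOp_eq_piKron, piKron_mul, trace_piKron, norm_div, norm_prod, hsite]
  simp

section Monomial

variable {n k m : ℕ}

def siteFactor (V : Fin k → Fin m → ZMod 2) (P : Fin m → Fin n → Fin 4) (a : Fin k)
    (b : Fin n) : Matrix (Fin 2) (Fin 2) ℂ :=
  (List.ofFn fun i => pauli1 (if V a i = 1 then P i b else 0)).prod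

def monomialTerm (V : Fin k → Fin m → ZMod 2) (P : Fin m → Fin n → Fin 4) :
    Matrix (Fin k → Fin n → Fin 2) (Fin k → Fin n → Fin 2) ℂ :=
  (List.ofFn fun i : Fin m => tensorPow n k (PauliOp n (P i)) (fun a => V a i)).prod

def monomialCoeff (M : Fin m → Fin m → ZMod 2) (P : Fin m → Fin n → Fin 4) : ℂ :=
  ∏ q ∈ Finset.univ.filter (fun q : Fin m × Fin m => q.1 < q.2),
    chi n (PauliOp n (P q.1)) (PauliOp n (P q.2)) ^ (M q.1 q.2).val

lemma pauliMonomial_eq_sum (V : Fin k → Fin m → ZMod 2) (M : Fin m → Fin m → ZMod 2) :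
    pauliMonomial n k m V M =
      (((2 : ℂ) ^ n) ^ m)⁻¹ • ∑ P : Fin m → Fin n → Fin 4, monomialCoeff M P • monomialTerm V P :=
  rfl

lemma norm_monomialCoeff (M : Fin m → Fin m → ZMod 2) (P : Fin m → Fin n → Fin 4) :
    ‖monomialCoeff M P‖ = 1 := by
  simp [monomialCoeff, norm_chi_pauliOp]

lemma tensorPow_eq_piKron (A : Matrix (Fin n → Fin 2) (Fin n → Fin 2) ℂ) (v : Fin k → ZMod 2) :
    tensorPow n k A v = piKron fun a => if v a = 1 then A else 1 := by
  ext I J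
  simp only [tensorPow, piKron, of_apply]
  refine Finset.prod_congr rfl fun a _ => ?_
  split_ifs <;> simp [one_apply, *]

lemma tensorPow_pauliOp (s : Fin n → Fin 4) (v : Fin k → ZMod 2) :
    tensorPow n k (PauliOp n s) v =
      piKron fun a => piKron fun b => pauli1 (if v a = 1 then s b else 0) := by
  rw [tensorPow_eq_piKron]
  congr 1
  funext a
  split_ifs
  · rfl
  · simp only [pauli1_zero, piKron_one]

lemma monomialTerm_eq_piKron (V : Fin k → Fin m → ZMod 2) (P : Fin m → Fin n → Fin 4) :
    monomialTerm V P = piKron fun a => piKron fun b => siteFactor V P a b := by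
  simp only [monomialTerm, tensorPow_pauliOp, piKron_ofFn_prod]
  rfl

lemma siteFactor_mem_unitary (V : Fin k → Fin m → ZMod 2) (P : Fin m → Fin n → Fin 4)
    (a : Fin k) (b : Fin n) : siteFactor V P a b ∈ unitary (Matrix (Fin 2) (Fin 2) ℂ) :=
  list_prod_mem fun _ h => by
    obtain ⟨i, rfl⟩ := List.mem_ofFn.mp h
    exact pauli1_mem_unitary _

lemma trace_conjTranspose_siteFactor_mul_self (V : Fin k → Fin m → ZMod 2)
    (P : Fin m → Fin n → Fin 4) (a : Fin k) (b : Fin n) :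
    trace ((siteFactor V P a b)ᴴ * siteFactor V P a b) = 2 := by
  rw [← star_eq_conjTranspose, Unitary.star_mul_self_of_mem (siteFactor_mem_unitary V P a b),
    trace_one, Fintype.card_fin, Nat.cast_ofNat]

lemma pauli1_mul_siteFactor (c : Fin 4) (V : Fin k → Fin m → ZMod 2)
    (P : Fin m → Fin n → Fin 4) (a : Fin k) (b : Fin n) :
    pauli1 c * siteFactor V P a b =
      (-1 : ℂ) ^ (∑ i, V a i * pauliSymplectic c (P i b)).val •
        (siteFactor V P a b * pauli1 c) := by
  simp only [siteFactor, pauli1_mul_ofFn_prod, pauliSymplectic_ite]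

lemma exists_trace_siteFactor_eq_zero {V : Fin k → Fin m → ZMod 2}
    (hV : LinearIndependent (ZMod 2) fun i a => V a i) {P Q : Fin m → Fin n → Fin 4}
    (hPQ : P ≠ Q) : ∃ a b, trace ((siteFactor V P a b)ᴴ * siteFactor V Q a b) = 0 := by
  obtain ⟨i₀, hi₀⟩ := Function.ne_iff.mp hPQ
  obtain ⟨b, hb⟩ := Function.ne_iff.mp hi₀
  obtain ⟨c, hc⟩ := exists_pauliSymplectic_ne hb
  -- `x i = 1` iff `c` anticommutes with exactly one of `P i b`, `Q i b`
  set x : Fin m → ZMod 2 := fun i => pauliSymplectic c (P i b) + pauliSymplectic c (Q i b)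
  have hx : x ≠ 0 := fun h => hc (CharTwo.add_eq_zero.mp (congr_fun h i₀))
  obtain ⟨a, ha⟩ : ∃ a, ∑ i, x i * V a i ≠ 0 := by
    by_contra! h
    exact hx (funext (Fintype.linearIndependent_iff.mp hV x
      (funext fun a => by simpa [Finset.sum_apply] using h a)))
  refine ⟨a, b, trace_conjTranspose_mul_eq_zero_of_mul_eq_smul (pauli1_mem_unitary c)
    (pauli1_mul_siteFactor c V P a b) (pauli1_mul_siteFactor c V Q a b) ?_⟩
  have hsum : ∑ i, V a i * pauliSymplectic c (P i b) + ∑ i, V a i * pauliSymplectic c (Q i b)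
      = 1 := by
    have hone : ∀ y : ZMod 2, y ≠ 0 → y = 1 := by decide
    simpa only [← Finset.sum_add_distrib, ← mul_add, mul_comm] using hone _ ha
  rw [star_pow, star_neg, star_one, ← neg_one_pow_val_add, hsum, ZMod.val_one, pow_one]

lemma trace_conjTranspose_monomialTerm_mul {V : Fin k → Fin m → ZMod 2}
    (hV : LinearIndependent (ZMod 2) fun i a => V a i) (P Q : Fin m → Fin n → Fin 4) :
    trace ((monomialTerm V P)ᴴ * monomialTerm V Q) = if P = Q then ((2 : ℂ) ^ n) ^ k else 0 := by
  simp only [monomialTerm_eq_piKron, trace_conjTranspose_piKron_mul]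
  split_ifs with h
  · subst h
    simp [trace_conjTranspose_siteFactor_mul_self]
  · obtain ⟨a, b, hab⟩ := exists_trace_siteFactor_eq_zero hV h
    exact Finset.prod_eq_zero (Finset.mem_univ a) (Finset.prod_eq_zero (Finset.mem_univ b) hab)

lemma trace_conjTranspose_pauliMonomial_mul_self (n : ℕ) {V : Fin k → Fin m → ZMod 2}
    (hV : LinearIndependent (ZMod 2) fun i a => V a i) (M : Fin m → Fin m → ZMod 2) :
    trace ((pauliMonomial n k m V M)ᴴ * pauliMonomial n k m V M) = ((2 : ℂ) ^ n) ^ k := by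
  have hcoeff (P : Fin m → Fin n → Fin 4) : star (monomialCoeff M P) * monomialCoeff M P = 1 := by
    rw [RCLike.star_def, Complex.conj_mul', norm_monomialCoeff]
    simp
  have hcard : (((4 ^ n) ^ m : ℕ) : ℂ) = ((2 ^ n) ^ m) ^ 2 := by
    push_cast
    rw [← pow_mul, ← pow_mul, ← pow_mul, show (4 : ℂ) = 2 ^ 2 by norm_num, ← pow_mul]
    ring_nf
  rw [pauliMonomial_eq_sum, conjTranspose_smul, smul_mul_smul_comm, trace_smul,
    trace_conjTranspose_sum_smul_mul_self_of_orthogonal _ _ _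
      (trace_conjTranspose_monomialTerm_mul hV)]
  simp only [hcoeff, one_mul, Finset.sum_const, Finset.card_univ, Fintype.card_fun,
    Fintype.card_fin, nsmul_eq_mul, smul_eq_mul]
  rw [hcard, star_inv₀, star_pow, star_pow, star_ofNat]
  field_simp

end Monomial

theorem reduced_pauli_monomial_trace_eq_iff_general (n k : ℕ) (m m' : ℕ)
    (V : Fin k → Fin m → ZMod 2) (M : Fin m → Fin m → ZMod 2)
    (V' : Fin k → Fin m' → ZMod 2) (M' : Fin m' → Fin m' → ZMod 2)
    (hVind : LinearIndependent (ZMod 2) (fun i : Fin m => fun a : Fin k => V a i))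
    (hVind' : LinearIndependent (ZMod 2) (fun i : Fin m' => fun a : Fin k => V' a i)) :
    Matrix.trace ((pauliMonomial n k m V M)ᴴ * pauliMonomial n k m' V' M') =
        ((2 : ℂ) ^ n) ^ k ↔
      pauliMonomial n k m V M = pauliMonomial n k m' V' M' := by
  have hΩ := trace_conjTranspose_pauliMonomial_mul_self n hVind M
  have hΩ' := trace_conjTranspose_pauliMonomial_mul_self n hVind' M'
  exact ⟨eq_of_trace_conjTranspose_mul_eq hΩ hΩ', fun h => h ▸ hΩ'⟩

/-- For `n ≥ k−1` and reduced Pauli monomials `Ω = Ω(V,M)`, `Ω′ = Ω(V′,M′)` (columns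
of `V`, `V′` of even Hamming weight and linearly independent over `F₂`, with
`m, m′ ≤ k−1`), one has `tr(Ω†Ω′) = d^k` if and only if `Ω = Ω′`. -/
theorem reduced_pauli_monomial_trace_eq_iff (n k : ℕ) (hn : 1 ≤ n) (hk : 1 ≤ k)
    (hkn : k ≤ n + 1) (m m' : ℕ) (hm : m < k) (hm' : m' < k)
    (V : Fin k → Fin m → ZMod 2) (M : Fin m → Fin m → ZMod 2)
    (V' : Fin k → Fin m' → ZMod 2) (M' : Fin m' → Fin m' → ZMod 2)
    (hV : ∀ i : Fin m, Even (Finset.univ.filter (fun a : Fin k => V a i = 1)).card)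
    (hVind : LinearIndependent (ZMod 2) (fun i : Fin m => fun a : Fin k => V a i))
    (hM : ∀ i j, M i j = M j i) (hMd : ∀ i, M i i = 0)
    (hV' : ∀ i : Fin m', Even (Finset.univ.filter (fun a : Fin k => V' a i = 1)).card)
    (hVind' : LinearIndependent (ZMod 2) (fun i : Fin m' => fun a : Fin k => V' a i))
    (hM' : ∀ i j, M' i j = M' j i) (hMd' : ∀ i, M' i i = 0) :
    Matrix.trace ((pauliMonomial n k m V M)ᴴ * pauliMonomial n k m' V' M') =
        ((2 : ℂ) ^ n) ^ k ↔
      pauliMonomial n k m V M = pauliMonomial n k m' V' M' :=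
  reduced_pauli_monomial_trace_eq_iff_general n k m m' V M V' M' hVind hVind'
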